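/- arXiv:1709.03071 — 2 statements merged into one kernel-verified Lean document; each statement's English description precedes it below -/
import Mathlib

section
/- Let G be a binary quasigroup of order n with operation * and let k, d ≥ 1. If Per_k(S_{d+1}(G)) > 0 then for every integer m ≥ 0 we have Per_k(S_{d+2m+1}(G)) > 0; moreover, per_k(S_{d+2m+1}(G)) ≥ ((k·n)!/(k!)^n)^m · per_k(S_{d+1}(G)). -/
/-- The left-to-right product `((a₁ * a₂) * ⋯) * a_m` of a list of elements of `Fin n`
under a binary operation `op`, where `e` is returned for the empty list
(all uses below have nonempty lists). -/
def leftProd {n : ℕ} (op : Fin n → Fin n → Fin n) (e : Fin n) : List (Fin n) → Fin n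
  | [] => e
  | a :: l => l.foldl op a

/-- `SdSet op e d` is the support `S_d(G)` of the `d`-dimensional MDS code
`M(G^[d-1])` of the `(d-1)`-iterated quasigroup `G` with operation `op`:
the set of `(x₁, …, x_d)` with `((…((x₁ * x₂) * x₃) * …) * x_d = e`,
where `e` plays the role of the fixed element `1` of `Fin n`. -/
def SdSet {n : ℕ} (op : Fin n → Fin n → Fin n) (e : Fin n) (d : ℕ) :
    Set (Fin d → Fin n) :=
  {x | leftProd op e (List.ofFn x) = e}

/-- `IsKMultiplex S k K` says that the multiset `K` is a `k`-multiplex over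
`S ⊆ (Fin n)^d`: it consists of `k·n` elements of `S` and, for every coordinate `j`
and every symbol `v`, exactly `k` elements of `K` (counted with multiplicity) have
`j`-th coordinate equal to `v`. -/
def IsKMultiplex {n d : ℕ} (S : Set (Fin d → Fin n)) (k : ℕ)
    (K : Multiset (Fin d → Fin n)) : Prop :=
  Multiset.card K = k * n ∧ (∀ x ∈ K, x ∈ S) ∧
    ∀ (j : Fin d) (v : Fin n), Multiset.card (K.filter (fun x => x j = v)) = k

/-- `Perk S k` is the number of `k`-multiplexes over `S` (the `k`-multipermanent). -/
noncomputable def Perk {n d : ℕ} (S : Set (Fin d → Fin n)) (k : ℕ) : ℕ :=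
  Set.ncard {K : Multiset (Fin d → Fin n) | IsKMultiplex S k K}

/-- `perk S k` is the number of `k`-plexes in `S` (`k`-multiplexes without repeated
elements), i.e. the `k`-permanent. -/
noncomputable def perk {n d : ℕ} (S : Set (Fin d → Fin n)) (k : ℕ) : ℕ :=
  Set.ncard {K : Multiset (Fin d → Fin n) | K.Nodup ∧ IsKMultiplex S k K}

/-!
Enumerate a `k`-plex `K` over `S_D` as `x₁, …, x_{kn}` and colour the indices by a map `y` that
uses each of the `n` colours exactly `k` times. Append to `x_i` the pair `(y_i, (e * y_i) \ e)`,
where `u \ v` is the solution `z` of `u * z = v`. As `x_i` multiplies out to `e`, the longer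
word multiplies out to `(e * y_i) * ((e * y_i) \ e) = e`, and the two new columns are balanced
because `a ↦ (e * a) \ e` is a bijection. This gives a `k`-plex over `S_{D+2}`, distinct pairs
`(K, y)` give distinct `k`-plexes, and there are `(kn)! / (k!)^n` colourings (orbit–stabiliser for
permutations of the indices acting on `y`). Iterating `m` times gives the bound; the same gluing
without `Nodup` gives `Per_k > 0`.
-/

open Equiv MulAction

section FiberCount

variable {α ι : Type*} [Fintype α] [DecidableEq ι]

theorem mem_orbit_domMulAct_iff {f g : α → ι} :
    g ∈ orbit (Perm α)ᵈᵐᵃ f ↔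
      ∀ i, Fintype.card {a // g a = i} = Fintype.card {a // f a = i} := by
  constructor
  · rintro ⟨σ, rfl⟩ i
    exact Fintype.card_congr (subtypeEquiv (DomMulAct.mk.symm σ) fun _ => Iff.rfl)
  · intro h
    exact ⟨DomMulAct.mk (ofFiberEquiv fun i => Fintype.equivOfCardEq (h i)),
      funext (ofFiberEquiv_map _)⟩

theorem ncard_sameFiberCard_mul_prod_factorial [DecidableEq α] [Fintype ι] (f : α → ι) :
    {g : α → ι | ∀ i, Fintype.card {a // g a = i} = Fintype.card {a // f a = i}}.ncard *
      ∏ i, (Fintype.card {a // f a = i}).factorial = (Fintype.card α).factorial := by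
  have horbit : {g : α → ι | ∀ i, Fintype.card {a // g a = i} = Fintype.card {a // f a = i}} =
      orbit (Perm α)ᵈᵐᵃ f := Set.ext fun _ => mem_orbit_domMulAct_iff.symm
  have hstab : Nat.card (stabilizer (Perm α)ᵈᵐᵃ f) =
      ∏ i, (Fintype.card {a // f a = i}).factorial := by
    rw [← DomMulAct.stabilizer_card f, ← Nat.card_eq_fintype_card]
    exact Nat.card_congr (subtypeEquiv DomMulAct.mk fun _ => Iff.rfl).symm
  rw [horbit, ← index_stabilizer, ← hstab, Subgroup.index_mul_card,
    Nat.card_congr DomMulAct.mk.symm, Nat.card_perm, Nat.card_eq_fintype_card]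

end FiberCount

def IsBalanced {N n : ℕ} (k : ℕ) (y : Fin N → Fin n) : Prop :=
  ∀ v, Fintype.card {i // y i = v} = k

theorem exists_isBalanced (n k : ℕ) : ∃ y : Fin (k * n) → Fin n, IsBalanced k y := by
  refine ⟨fun i => (finProdFinEquiv.symm i).2, fun v => ?_⟩
  rw [Fintype.card_subtype, Finset.card_equiv finProdFinEquiv.symm
    (t := Finset.univ ×ˢ Finset.univ |>.filter fun p : Fin k × Fin n => p.2 = v) (by simp),
    Finset.filter_product_right (q := (· = v))]
  simp [Finset.filter_eq']

theorem ncard_isBalanced_mul_factorial_pow (n k : ℕ) :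
    {y : Fin (k * n) → Fin n | IsBalanced k y}.ncard * k.factorial ^ n = (k * n).factorial := by
  obtain ⟨y₀, hy₀⟩ := exists_isBalanced n k
  have h := ncard_sameFiberCard_mul_prod_factorial y₀
  simp only [show ∀ v, Fintype.card {i // y₀ i = v} = k from hy₀, Finset.prod_const,
    Finset.card_univ, Fintype.card_fin] at h
  exact h

theorem List.Nodup.eq_of_zip_perm {α β : Type*} {L : List α} (hL : L.Nodup) {l₁ l₂ : List β}
    (h₁ : l₁.length = L.length) (h₂ : l₂.length = L.length)
    (h : (L.zip l₁).Perm (L.zip l₂)) :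
    l₁ = l₂ := by
  refine List.ext_getElem (h₁.trans h₂.symm) fun i hi₁ _ => ?_
  have hi : i < L.length := h₁ ▸ hi₁
  have hmem : (L[i], l₁[i]) ∈ L.zip l₂ := h.subset (by
    rw [List.mem_iff_getElem]
    exact ⟨i, by simp [hi, hi₁], by simp⟩)
  obtain ⟨j, hj, hji⟩ := List.mem_iff_getElem.1 hmem
  simp only [List.getElem_zip, Prod.mk.injEq] at hji
  have hj' : j < L.length := by simp only [List.length_zip] at hj; omega
  obtain rfl : j = i := (hL.getElem_inj_iff (hi := hj') (hj := hi)).1 hji.1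
  exact hji.2.symm

theorem Multiset.setOf_card_eq_finite (α : Type*) [Finite α] (N : ℕ) :
    {K : Multiset α | Multiset.card K = N}.Finite := by
  have : Fintype α := Fintype.ofFinite α
  refine (Set.finite_range fun s : Sym α N => (s : Multiset α)).subset fun K hK => ?_
  exact ⟨⟨K, hK⟩, rfl⟩

namespace Multiset

variable {α β : Type*}

theorem map_fst_coe_zip_toList {K : Multiset α} {l : List β} (h : card K ≤ l.length) :
    (K.toList.zip l : Multiset (α × β)).map Prod.fst = K := by
  rw [map_coe, List.map_fst_zip (by rwa [length_toList]), coe_toList]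

theorem map_snd_coe_zip_toList {K : Multiset α} {l : List β} (h : l.length ≤ card K) :
    (K.toList.zip l : Multiset (α × β)).map Prod.snd = l := by
  rw [map_coe, List.map_snd_zip (by rwa [length_toList])]

theorem Nodup.toList {K : Multiset α} (h : K.Nodup) : K.toList.Nodup := by
  rwa [← coe_nodup, coe_toList]

end Multiset

theorem Multiset.card_filter_coe_ofFn {α : Type*} {N : ℕ} (f : Fin N → α) (p : α → Prop)
    [DecidablePred p] :
    Multiset.card ((List.ofFn f : Multiset α).filter p) = Fintype.card {i // p (f i)} := by
  rw [← Fin.univ_val_map, Multiset.filter_map, Multiset.card_map, Fintype.card_subtype]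
  rfl

section Multiplex

variable {n D E k : ℕ}

theorem setOf_isKMultiplex_finite (S : Set (Fin D → Fin n)) (k : ℕ) :
    {K | IsKMultiplex S k K}.Finite :=
  (Multiset.setOf_card_eq_finite _ (k * n)).subset fun _ hK => hK.1

theorem IsKMultiplex.map_append {S : Set (Fin D → Fin n)} {T : Set (Fin E → Fin n)}
    {S' : Set (Fin (D + E) → Fin n)} {P : Multiset ((Fin D → Fin n) × (Fin E → Fin n))}
    (hS : IsKMultiplex S k (P.map Prod.fst)) (hT : IsKMultiplex T k (P.map Prod.snd))
    (hST : ∀ x ∈ S, ∀ t ∈ T, Fin.append x t ∈ S') :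
    IsKMultiplex S' k (P.map (Fin.appendEquiv D E)) := by
  obtain ⟨hcard, hmemS, hcolS⟩ := hS
  obtain ⟨-, hmemT, hcolT⟩ := hT
  refine ⟨by simpa using hcard, ?_, fun j v => ?_⟩
  · simp only [Multiset.mem_map]
    rintro _ ⟨p, hp, rfl⟩
    exact hST _ (hmemS _ (Multiset.mem_map_of_mem _ hp)) _
      (hmemT _ (Multiset.mem_map_of_mem _ hp))
  · induction j using Fin.addCases with
    | left j => simpa [Multiset.filter_map] using hcolS j v
    | right j => simpa [Multiset.filter_map] using hcolT j v

theorem Perk_pos_append {S : Set (Fin D → Fin n)} {T : Set (Fin E → Fin n)}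
    {S' : Set (Fin (D + E) → Fin n)} (hST : ∀ x ∈ S, ∀ t ∈ T, Fin.append x t ∈ S')
    (hS : 0 < Perk S k) (hT : 0 < Perk T k) : 0 < Perk S' k := by
  obtain ⟨K, hK⟩ := (Set.ncard_pos (setOf_isKMultiplex_finite S k)).1 hS
  obtain ⟨Y, hY⟩ := (Set.ncard_pos (setOf_isKMultiplex_finite T k)).1 hT
  have hlen : (Y.toList).length = Multiset.card K := by
    rw [Multiset.length_toList, hK.1, hY.1]
  refine (Set.ncard_pos (setOf_isKMultiplex_finite S' k)).2 ⟨_, IsKMultiplex.map_append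
    (P := K.toList.zip Y.toList) ?_ ?_ hST⟩
  · rwa [Multiset.map_fst_coe_zip_toList hlen.ge]
  · rwa [Multiset.map_snd_coe_zip_toList hlen.le, Multiset.coe_toList]

theorem ncard_mul_perk_le_perk_append {S : Set (Fin D → Fin n)} {T : Set (Fin E → Fin n)}
    {S' : Set (Fin (D + E) → Fin n)} (hST : ∀ x ∈ S, ∀ t ∈ T, Fin.append x t ∈ S') :
    {Y : Fin (k * n) → Fin E → Fin n | IsKMultiplex T k (List.ofFn Y)}.ncard * perk S k ≤
      perk S' k := by
  set 𝒴 := {Y : Fin (k * n) → Fin E → Fin n | IsKMultiplex T k (List.ofFn Y)}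
  set A := {K : Multiset (Fin D → Fin n) | K.Nodup ∧ IsKMultiplex S k K}
  let Φ : (Fin (k * n) → Fin E → Fin n) × Multiset (Fin D → Fin n) →
      Multiset (Fin (D + E) → Fin n) :=
    fun p => (p.2.toList.zip (List.ofFn p.1) : Multiset _).map (Fin.appendEquiv D E)
  have hlen : ∀ K ∈ A, ∀ Y : Fin (k * n) → Fin E → Fin n,
      (List.ofFn Y).length = Multiset.card K := fun K hK Y => by rw [List.length_ofFn, hK.2.1]
  have hmaps : Set.MapsTo Φ (𝒴 ×ˢ A) {K' | K'.Nodup ∧ IsKMultiplex S' k K'} := by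
    rintro ⟨Y, K⟩ ⟨hY, hK⟩
    refine ⟨Multiset.Nodup.map (Fin.appendEquiv D E).injective ?_,
      IsKMultiplex.map_append ?_ ?_ hST⟩
    · exact Multiset.coe_nodup.2 (List.Nodup.of_map Prod.fst
        (by rw [List.map_fst_zip (by rw [Multiset.length_toList, hlen K hK Y])]; exact hK.1.toList))
    · rw [Multiset.map_fst_coe_zip_toList (hlen K hK Y).ge]; exact hK.2
    · rwa [Multiset.map_snd_coe_zip_toList (hlen K hK Y).le]
  -- `K` is read off the first `D` coordinates; as `K.toList` has no repeats, the zip then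
  -- determines `Y`.
  have hinj : Set.InjOn Φ (𝒴 ×ˢ A) := by
    rintro ⟨Y, K⟩ ⟨-, hK⟩ ⟨Y', K'⟩ ⟨-, hK'⟩ h
    have hzip := Multiset.map_injective (Fin.appendEquiv D E).injective h
    obtain rfl : K = K' := by
      rw [← Multiset.map_fst_coe_zip_toList (hlen K hK Y).ge, hzip,
        Multiset.map_fst_coe_zip_toList (hlen K' hK' Y').ge]
    have hl : ∀ Y : Fin (k * n) → Fin E → Fin n, (List.ofFn Y).length = K.toList.length :=
      fun Y => by rw [Multiset.length_toList, hlen K hK Y]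
    exact Prod.ext (List.ofFn_injective (hK.1.toList.eq_of_zip_perm (hl Y) (hl Y')
      (Multiset.coe_eq_coe.1 hzip))) rfl
  calc 𝒴.ncard * A.ncard = (Φ '' (𝒴 ×ˢ A)).ncard := by
        rw [hinj.ncard_image, Set.ncard_prod]
    _ ≤ perk S' k := Set.ncard_le_ncard hmaps.image_subset
        ((setOf_isKMultiplex_finite S' k).subset fun _ h => h.2)

theorem isKMultiplex_ofFn_comp {T : Set (Fin E → Fin n)} {φ : Fin n → Fin E → Fin n}
    (hφT : ∀ a, φ a ∈ T) (hφ : ∀ j, Function.Bijective fun a => φ a j)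
    {y : Fin (k * n) → Fin n} (hy : IsBalanced k y) :
    IsKMultiplex T k (List.ofFn (φ ∘ y)) := by
  refine ⟨by simp, fun t ht => ?_, fun j v => ?_⟩
  · obtain ⟨i, rfl⟩ := List.mem_ofFn.1 (Multiset.mem_coe.1 ht)
    exact hφT _
  · let σ := Equiv.ofBijective _ (hφ j)
    rw [Multiset.card_filter_coe_ofFn]
    exact (Fintype.card_congr (Equiv.subtypeEquivRight fun i => σ.eq_symm_apply.symm)).trans
      (hy (σ.symm v))

theorem ncard_isBalanced_le_ncard_isKMultiplex_ofFn [NeZero E] {T : Set (Fin E → Fin n)}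
    {φ : Fin n → Fin E → Fin n} (hφT : ∀ a, φ a ∈ T)
    (hφ : ∀ j, Function.Bijective fun a => φ a j) :
    {y : Fin (k * n) → Fin n | IsBalanced k y}.ncard ≤
      {Y : Fin (k * n) → Fin E → Fin n | IsKMultiplex T k (List.ofFn Y)}.ncard :=
  Set.ncard_le_ncard_of_injOn (φ ∘ ·) (fun _ hy => isKMultiplex_ofFn_comp hφT hφ hy)
    fun _ _ _ _ h => funext fun i => (hφ 0).1 (congrFun (congrFun h i) 0)

end Multiplex

section Quasigroup

variable {n : ℕ} (op : Fin n → Fin n → Fin n) (e : Fin n)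

theorem leftProd_append {L : List (Fin n)} (hL : L ≠ []) (M : List (Fin n)) :
    leftProd op e (L ++ M) = M.foldl op (leftProd op e L) := by
  cases L with
  | nil => exact absurd rfl hL
  | cons a L => simp [leftProd, List.foldl_append]

theorem append_mem_SdSet {D E : ℕ} (hD : D ≠ 0) {x : Fin D → Fin n} (hx : x ∈ SdSet op e D)
    {t : Fin E → Fin n} (ht : (List.ofFn t).foldl op e = e) :
    Fin.append x t ∈ SdSet op e (D + E) := by
  have hne : List.ofFn x ≠ [] := by simpa using hD
  simp only [SdSet, Set.mem_ofPred_eq, List.ofFn_fin_append] at hx ⊢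
  rwa [leftProd_append op e hne, hx]

noncomputable def leftDiv (hL : ∀ a, Function.Bijective (op a)) (a b : Fin n) : Fin n :=
  (Equiv.ofBijective (op a) (hL a)).symm b

theorem op_leftDiv (hL : ∀ a, Function.Bijective (op a)) (a b : Fin n) :
    op a (leftDiv op hL a b) = b :=
  Equiv.ofBijective_apply_symm_apply _ (hL a) b

theorem leftDiv_injective_left (hL : ∀ a, Function.Bijective (op a))
    (hR : ∀ a, Function.Injective fun x => op x a) (b : Fin n) :
    Function.Injective fun a => leftDiv op hL a b := by
  intro a a' h
  apply hR (leftDiv op hL a b)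
  simp only at h ⊢
  rw [op_leftDiv op hL a, h, op_leftDiv op hL a']

theorem exists_transversal_foldl_eq (hop : ∀ a : Fin n, Function.Bijective (op a) ∧
      Function.Bijective (fun x => op x a)) :
    ∃ φ : Fin n → Fin 2 → Fin n, (∀ a, (List.ofFn (φ a)).foldl op e = e) ∧
      ∀ j, Function.Bijective fun a => φ a j := by
  have hL : ∀ a, Function.Bijective (op a) := fun a => (hop a).1
  refine ⟨fun a => ![a, leftDiv op hL (op e a) e], fun a => ?_, fun j => ?_⟩
  · simp [op_leftDiv]
  · fin_cases j
    · exact Function.bijective_id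
    · exact Finite.injective_iff_bijective.1
        ((leftDiv_injective_left op hL (fun a => (hop a).2.1) e).comp (hL e).1)

theorem Perk_SdSet_add_two_pos (hop : ∀ a : Fin n, Function.Bijective (op a) ∧
      Function.Bijective (fun x => op x a)) {D k : ℕ} (hD : D ≠ 0)
    (h : 0 < Perk (SdSet op e D) k) : 0 < Perk (SdSet op e (D + 2)) k := by
  obtain ⟨φ, hφT, hφ⟩ := exists_transversal_foldl_eq op e hop
  obtain ⟨y, hy⟩ := exists_isBalanced n k
  refine Perk_pos_append (T := {t : Fin 2 → Fin n | (List.ofFn t).foldl op e = e})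
    (fun x hx t ht => append_mem_SdSet op e hD hx ht) h ?_
  exact (Set.ncard_pos (setOf_isKMultiplex_finite _ k)).2
    ⟨_, isKMultiplex_ofFn_comp hφT hφ hy⟩

theorem ncard_isBalanced_mul_perk_SdSet_le (hop : ∀ a : Fin n, Function.Bijective (op a) ∧
      Function.Bijective (fun x => op x a)) {D k : ℕ} (hD : D ≠ 0) :
    {y : Fin (k * n) → Fin n | IsBalanced k y}.ncard * perk (SdSet op e D) k ≤
      perk (SdSet op e (D + 2)) k := by
  obtain ⟨φ, hφT, hφ⟩ := exists_transversal_foldl_eq op e hop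
  exact (Nat.mul_le_mul_right _ (ncard_isBalanced_le_ncard_isKMultiplex_ofFn
      (T := {t : Fin 2 → Fin n | (List.ofFn t).foldl op e = e}) hφT hφ)).trans
    (ncard_mul_perk_le_perk_append fun x hx t ht => append_mem_SdSet op e hD hx ht)

end Quasigroup

theorem perk_lift_two_dims_general {n : ℕ} (op : Fin n → Fin n → Fin n) (e : Fin n)
    (hop : ∀ a : Fin n, Function.Bijective (op a) ∧ Function.Bijective (fun x => op x a))
    (k d : ℕ)
    (hpos : 0 < Perk (SdSet op e (d + 1)) k) :
    ∀ m : ℕ,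
      0 < Perk (SdSet op e (d + 2 * m + 1)) k ∧
      (((k * n).factorial : ℝ) / (k.factorial : ℝ) ^ n) ^ m *
          (perk (SdSet op e (d + 1)) k : ℝ) ≤
        (perk (SdSet op e (d + 2 * m + 1)) k : ℝ) := by
  set B := {y : Fin (k * n) → Fin n | IsBalanced k y}.ncard
  have hB : ((k * n).factorial : ℝ) / (k.factorial : ℝ) ^ n = B := by
    rw [div_eq_iff (by positivity)]
    exact_mod_cast (ncard_isBalanced_mul_factorial_pow n k).symm
  intro m
  induction m with
  | zero => simpa using hpos
  | succ m ih =>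
    have hD : d + 2 * m + 1 ≠ 0 := Nat.succ_ne_zero _
    have hstep : (B : ℝ) * perk (SdSet op e (d + 2 * m + 1)) k ≤
        perk (SdSet op e (d + 2 * m + 1 + 2)) k := by
      exact_mod_cast ncard_isBalanced_mul_perk_SdSet_le op e hop hD
    rw [show d + 2 * (m + 1) + 1 = d + 2 * m + 1 + 2 by ring, hB]
    refine ⟨Perk_SdSet_add_two_pos op e hop hD ih.1, ?_⟩
    calc (B : ℝ) ^ (m + 1) * perk (SdSet op e (d + 1)) k
        = B * (B ^ m * perk (SdSet op e (d + 1)) k) := by ring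
      _ ≤ B * perk (SdSet op e (d + 2 * m + 1)) k := by
        gcongr
        exact hB ▸ ih.2
      _ ≤ _ := hstep

/-- For a binary quasigroup `op` of order `n` and `k, d ≥ 1`, if
`Per_k(S_{d+1}(G)) > 0` then for every `m ≥ 0` we have `Per_k(S_{d+2m+1}(G)) > 0`,
and moreover `per_k(S_{d+2m+1}(G)) ≥ ((kn)!/(k!)^n)^m · per_k(S_{d+1}(G))`. -/
theorem perk_lift_two_dims {n : ℕ} (op : Fin n → Fin n → Fin n) (e : Fin n)
    (hop : ∀ a : Fin n, Function.Bijective (op a) ∧ Function.Bijective (fun x => op x a))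
    (k d : ℕ) (hk : 1 ≤ k) (hd : 1 ≤ d)
    (hpos : 0 < Perk (SdSet op e (d + 1)) k) :
    ∀ m : ℕ,
      0 < Perk (SdSet op e (d + 2 * m + 1)) k ∧
      (((k * n).factorial : ℝ) / (k.factorial : ℝ) ^ n) ^ m *
          (perk (SdSet op e (d + 1)) k : ℝ) ≤
        (perk (SdSet op e (d + 2 * m + 1)) k : ℝ) :=
  perk_lift_two_dims_general op e hop k d hpos
end

section
/- Let G be a finite group of order n and let k be an odd positive integer. Then there exists a constant c = c(G,k) > 0 such that Per_k(S_d(G)) / ((k·n)!/(k!)^n)^{d-2} tends to c as d → ∞ along the set of those d for which Per_k(S_d(G)) is nonzero, and per_k(S_d(G)) / ((k·n)!/(k!)^n)^{d-2} tends to the same constant c along the set of those d for which per_k(S_d(G)) is nonzero. -/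
/-- `SdG G d` is the support `S_d(G)` of the `d`-dimensional MDS code of the
`(d-1)`-iterated group `G`: the set of `(x₁, …, x_d) ∈ G^d` with
`x₁ · x₂ · ⋯ · x_d = 1`. -/
def SdG (G : Type*) [Monoid G] (d : ℕ) : Set (Fin d → G) :=
  {x | (List.ofFn x).prod = 1}

/-- `IsKMultiplexG S k K` says that the multiset `K` is a `k`-multiplex over
`S ⊆ G^d`: it consists of `k·|G|` elements of `S` and, for every coordinate `j` and
every element `v ∈ G`, exactly `k` elements of `K` (counted with multiplicity) have
`j`-th coordinate equal to `v`. -/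
def IsKMultiplexG {G : Type*} [Fintype G] [DecidableEq G] {d : ℕ}
    (S : Set (Fin d → G)) (k : ℕ) (K : Multiset (Fin d → G)) : Prop :=
  Multiset.card K = k * Fintype.card G ∧ (∀ x ∈ K, x ∈ S) ∧
    ∀ (j : Fin d) (v : G), Multiset.card (K.filter (fun x => x j = v)) = k

/-- `PerkG S k` is the number of `k`-multiplexes over `S` (the `k`-multipermanent). -/
noncomputable def PerkG {G : Type*} [Fintype G] [DecidableEq G] {d : ℕ}
    (S : Set (Fin d → G)) (k : ℕ) : ℕ :=
  Set.ncard {K : Multiset (Fin d → G) | IsKMultiplexG S k K}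

/-- `perkG S k` is the number of `k`-plexes in `S` (`k`-multiplexes without repeated
elements), i.e. the `k`-permanent. -/
noncomputable def perkG {G : Type*} [Fintype G] [DecidableEq G] {d : ℕ}
    (S : Set (Fin d → G)) (k : ℕ) : ℕ :=
  Set.ncard {K : Multiset (Fin d → G) | K.Nodup ∧ IsKMultiplexG S k K}

/-!
Write `N = k·|G|` and list the elements of a `k`-multiplex over `S_d(G)` as the rows of an
`N × d` array. Its columns are `k`-regular maps `Fin N → G`, and the rows lie in `S_d(G)` exactly
when the pointwise product of the columns is `1`. So the number `T_d` of such arrays counts the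
closed walks of length `d` in the Cayley graph of `G^N` with respect to the symmetric set `R` of
`k`-regular maps, and `|R| = N!/(k!)^|G|` by orbit–stabiliser.

By the spectral theorem for the symmetric transition matrix `P` of this walk,
`T_d/|R|^d = P^d(1,1) = ∑ wᵢ λᵢ^d` with `wᵢ ≥ 0` and `|λᵢ| ≤ 1`. Along even `d` this tends to
`∑_{|λᵢ|=1} wᵢ`, which is positive since `P^{2d}(1,1) = ∑_h P^d(1,h)² ≥ 1/|G^N|` by
Cauchy–Schwarz. If some closed walk has odd length the eigenvalue `-1` cannot occur and the limit
holds along all `d`; otherwise `T_d = 0` for odd `d`.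

Each multiplex is the row multiset of at most `N!` arrays, and of exactly `N!` when its rows are
distinct, so `N!·per_k ≤ T_d ≤ N!·Per_k`. A multiplex with a repeated row can be arranged with
equal rows at two fixed positions `i ≠ j`, so `Per_k - per_k ≤ b^d`, where `b` counts the regular
maps `f` with `f i = f j`. For `|G| ≥ 2` we have `b < |R|`, hence both counts are
`T_d/N! + o(|R|^d)` and after division by `|R|^(d-2)` share the limit `|R|²/N! · lim T_d/|R|^d`; for trivial `G`
both counts are at most `1`.
-/

open Finset Filter Matrix Equiv
open scoped Nat

lemma Matrix.IsHermitian.pow_apply_self_eq_sum {n : Type*} [Fintype n] [DecidableEq n]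
    {A : Matrix n n ℝ} (hA : A.IsHermitian) (d : ℕ) (a : n) :
    (A ^ d) a a = ∑ i, hA.eigenvectorBasis i a ^ 2 * hA.eigenvalues i ^ d := by
  conv_lhs => rw [hA.spectral_theorem, ← map_pow, diagonal_pow, Unitary.conjStarAlgAut_apply]
  simp [mul_apply, diagonal_apply]
  exact sum_congr rfl fun i _ => by ring

lemma tendsto_sum_mul_pow {ι : Type*} [Fintype ι] (w c : ι → ℝ) (hc : ∀ i, |c i| ≤ 1)
    (hc' : ∀ i, c i ≠ -1) :
    Tendsto (fun d => ∑ i, w i * c i ^ d) atTop (nhds (∑ i with c i = 1, w i)) := by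
  rw [sum_filter]
  refine tendsto_finsetSum _ fun i _ => ?_
  split_ifs with h
  · simp [h]
  · have : |c i| < 1 := (hc i).lt_of_ne fun h1 => (abs_eq zero_le_one).1 h1 |>.elim h (hc' i)
    simpa using (tendsto_pow_atTop_nhds_zero_of_abs_lt_one this).const_mul (w i)

lemma tendsto_div_pow_sub_two_of_abs_sub_le {f t : ℕ → ℝ} {r b c L : ℝ} {l : Filter ℕ}
    (hl : l ≤ atTop) (ht : Tendsto (fun d => t d / r ^ d) l (nhds L)) (hb : 0 ≤ b)
    (hbr : b < r) (hf : ∀ d, |f d - t d / c| ≤ b ^ d) :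
    Tendsto (fun d => f d / r ^ (d - 2)) l (nhds (r ^ 2 * (L / c))) := by
  have hr : 0 < r := hb.trans_lt hbr
  have herr : Tendsto (fun d => (f d - t d / c) / r ^ d) atTop (nhds 0) := by
    refine squeeze_zero_norm (fun d => ?_) (tendsto_pow_atTop_nhds_zero_of_lt_one
      (div_nonneg hb hr.le) ((div_lt_one hr).2 hbr))
    rw [norm_div, Real.norm_eq_abs, Real.norm_eq_abs, abs_of_pos (pow_pos hr d), div_pow]
    exact div_le_div_of_nonneg_right (hf d) (pow_pos hr d).le
  have hmain : Tendsto (fun d => f d / r ^ d) l (nhds (L / c)) := by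
    have := (ht.div_const c).add (herr.mono_left hl)
    rw [add_zero] at this
    exact this.congr fun d => by ring
  refine (hmain.const_mul (r ^ 2)).congr' ?_
  filter_upwards [(eventually_ge_atTop 2).filter_mono hl] with d hd
  obtain ⟨m, rfl⟩ := Nat.exists_eq_add_of_le' hd
  simp only [Nat.add_sub_cancel, pow_add]
  field_simp

lemma exists_perm_comp_eq_of_card_filter_eq {α β : Type*} [Fintype α] [DecidableEq β]
    {f g : α → β} (h : ∀ b, #{a | f a = b} = #{a | g a = b}) : ∃ σ : Perm α, g ∘ σ = f :=
  ⟨ofFiberEquiv fun b => Fintype.equivOfCardEq (by simpa [Fintype.card_subtype] using h b),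
    funext fun a => ofFiberEquiv_map _ a⟩

lemma card_filter_comp_perm {α : Type*} [Fintype α] (σ : Perm α) (p : α → Prop)
    [DecidablePred p] : #{a | p (σ a)} = #{a | p a} :=
  card_equiv σ (by simp)

lemma Equiv.Perm.exists_apply_eq_and_apply_eq {α : Type*} [DecidableEq α] {i j p q : α}
    (hij : i ≠ j) (hpq : p ≠ q) : ∃ σ : Perm α, σ i = p ∧ σ j = q := by
  have hi : i ≠ swap i p q := fun h => hpq (by simpa using congrArg (swap i p) h)
  exact ⟨swap i p * swap j (swap i p q), by simp [swap_apply_of_ne_of_ne hij hi], by simp⟩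

section MapUniv

variable {ι β : Type*} [Fintype ι]

lemma map_univ_comp_perm (x : ι → β) (σ : Perm ι) : univ.val.map (x ∘ σ) = univ.val.map x := by
  rw [← Multiset.map_map, Multiset.map_univ_val_equiv]

lemma exists_perm_comp_eq_of_map_univ_eq {x y : ι → β}
    (h : univ.val.map x = univ.val.map y) : ∃ σ : Perm ι, y ∘ σ = x := by
  classical
  exact exists_perm_comp_eq_of_card_filter_eq fun b => by
    simpa [Multiset.count_map, Finset.card_def, eq_comm] using congrArg (Multiset.count b) h

lemma exists_map_univ_eq {K : Multiset β} (hK : Multiset.card K = Fintype.card ι) :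
    ∃ x : ι → β, univ.val.map x = K := by
  classical
  let e : ι ≃ K := Fintype.equivOfCardEq (by rw [Multiset.card_coe, hK])
  refine ⟨fun i => e i, ?_⟩
  conv_rhs => rw [← Multiset.map_univ_coe K, ← Multiset.map_univ_val_equiv e, Multiset.map_map]
  rfl

end MapUniv

section Walk

variable {H : Type*} [Group H] [DecidableEq H] (R : Finset H)

noncomputable def walkMatrix : Matrix H H ℝ :=
  of fun g h => if g⁻¹ * h ∈ R then (#R : ℝ)⁻¹ else 0

lemma walkMatrix_isHermitian (hsymm : ∀ s ∈ R, s⁻¹ ∈ R) : (walkMatrix R).IsHermitian := by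
  refine IsHermitian.ext fun g h => ?_
  have key : ∀ a b : H, a⁻¹ * b ∈ R → b⁻¹ * a ∈ R := fun a b hab => by
    simpa using hsymm _ hab
  simp only [walkMatrix, of_apply, star_trivial]
  exact if_congr ⟨key h g, key g h⟩ rfl rfl

variable [Fintype H]

def words (d : ℕ) (h : H) : Finset (Fin d → H) :=
  {w | (∀ j, w j ∈ R) ∧ (List.ofFn w).prod = h}

lemma card_words_zero (h : H) : #(words R 0 h) = if h = 1 then 1 else 0 := by
  by_cases hh : h = 1 <;> simp [words, hh, eq_comm]

lemma card_words_succ (d : ℕ) (h : H) :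
    #(words R (d + 1) h) = ∑ s ∈ R, #(words R d (s⁻¹ * h)) := by
  rw [← card_sigma]
  refine card_nbij' (fun w => ⟨w 0, Fin.tail w⟩) (fun p => Fin.cons p.1 p.2) ?_ ?_ ?_ ?_
  · intro w hw
    simp only [words, coe_filter, Set.mem_ofPred_eq, mem_univ, true_and, Fin.forall_fin_succ,
      List.ofFn_succ, List.prod_cons] at hw
    simp [words, Fin.tail_def, hw.1.1, hw.1.2, ← hw.2]
  · rintro ⟨s, w⟩ hw
    simp only [coe_sigma, Set.mem_sigma_iff, mem_coe, words, mem_filter, mem_univ, true_and] at hw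
    simp [words, Fin.forall_fin_succ, List.ofFn_succ, hw.1, hw.2.1, hw.2.2]
  · intro w _
    simp
  · rintro ⟨s, w⟩ _
    simp

lemma walkMatrix_mulVec_apply (v : H → ℝ) (g : H) :
    (walkMatrix R *ᵥ v) g = (#R : ℝ)⁻¹ * ∑ s ∈ R, v (g * s) := by
  calc (walkMatrix R *ᵥ v) g = ∑ s, walkMatrix R g (g * s) * v (g * s) :=
        (Equiv.sum_comp (Equiv.mulLeft g) _).symm
    _ = ∑ s, if s ∈ R then (#R : ℝ)⁻¹ * v (g * s) else 0 := by simp [walkMatrix, ite_mul]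
    _ = _ := by rw [sum_ite_mem, univ_inter, mul_sum]

lemma walkMatrix_pow_apply (d : ℕ) (g h : H) :
    (walkMatrix R ^ d) g h = #(words R d (g⁻¹ * h)) / (#R : ℝ) ^ d := by
  induction d generalizing g with
  | zero => simp [card_words_zero, one_apply, inv_mul_eq_one, eq_comm]
  | succ d ih =>
    rw [pow_succ', card_words_succ, Nat.cast_sum, sum_div]
    change (walkMatrix R *ᵥ fun m => (walkMatrix R ^ d) m h) g = _
    simp only [walkMatrix_mulVec_apply, ih, mul_sum, pow_succ']
    refine sum_congr rfl fun s _ => ?_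
    rw [_root_.mul_inv_rev, mul_assoc]
    field_simp

lemma walkMatrix_pow_mulVec_one (hR : R.Nonempty) (d : ℕ) :
    walkMatrix R ^ d *ᵥ (fun _ => 1) = fun _ => 1 := by
  induction d with
  | zero => simp
  | succ d ih =>
    rw [pow_succ', ← mulVec_mulVec, ih]
    ext g
    rw [walkMatrix_mulVec_apply, sum_const, nsmul_one, inv_mul_cancel₀ (by simp [hR.ne_empty])]

lemma abs_walkMatrix_mulVec_apply_le (hR : R.Nonempty) {v : H → ℝ} {M : ℝ}
    (hM : ∀ h, |v h| ≤ M) (g : H) : |(walkMatrix R *ᵥ v) g| ≤ M := by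
  rw [walkMatrix_mulVec_apply, abs_mul, abs_inv, Nat.abs_cast,
    inv_mul_le_iff₀ (by simpa using hR)]
  calc |∑ s ∈ R, v (g * s)| ≤ ∑ s ∈ R, |v (g * s)| := abs_sum_le_sum_abs _ _
    _ ≤ #R * M := by simpa using sum_le_card_nsmul R _ M fun s _ => hM _

lemma abs_le_one_of_walkMatrix_mulVec_eq_smul (hR : R.Nonempty) {μ : ℝ} {v : H → ℝ}
    (hv : v ≠ 0) (hμ : walkMatrix R *ᵥ v = μ • v) : |μ| ≤ 1 := by
  obtain ⟨x, hx⟩ := Finite.exists_max fun h => |v h|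
  have hpos : 0 < |v x| := by
    obtain ⟨y, hy⟩ := Function.ne_iff.1 hv
    exact (abs_pos.2 hy).trans_le (hx y)
  have := abs_walkMatrix_mulVec_apply_le R hR hx x
  rw [hμ, Pi.smul_apply, smul_eq_mul, abs_mul] at this
  exact le_of_mul_le_mul_right (by simpa using this) hpos

/-- `-v g` is an extreme value of `v`, so it is the average of the `v (g * s)` only if all of
them equal it. -/
lemma apply_mul_eq_neg_of_walkMatrix_mulVec_eq_neg {v : H → ℝ} (hv : walkMatrix R *ᵥ v = -v)
    {g : H} (hg : ∀ h, |v h| ≤ |v g|) {s : H} (hs : s ∈ R) : v (g * s) = -v g := by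
  have hR : (#R : ℝ) ≠ 0 := by simpa using ne_empty_of_mem hs
  have hsum : ∑ t ∈ R, v (g * t) = -v g * #R := by
    have := congrFun hv g
    rw [walkMatrix_mulVec_apply, Pi.neg_apply] at this
    field_simp at this
    linarith
  have hterm : ∀ t ∈ R, 0 ≤ v g * v (g * t) + v g ^ 2 := fun t _ => by
    have : |v g * v (g * t)| ≤ v g ^ 2 := by
      rw [abs_mul, ← sq_abs, sq]
      exact mul_le_mul_of_nonneg_left (hg _) (abs_nonneg _)
    linarith [neg_abs_le (v g * v (g * t))]
  have hzero : ∑ t ∈ R, (v g * v (g * t) + v g ^ 2) = 0 := by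
    rw [sum_add_distrib, ← mul_sum, hsum, sum_const, nsmul_eq_mul]
    ring
  have h := (sum_eq_zero_iff_of_nonneg hterm).1 hzero s hs
  rcases eq_or_ne (v g) 0 with h0 | h0
  · simpa [h0] using hg (g * s)
  · have : v g * (v (g * s) + v g) = 0 := by linarith
    linarith [(mul_eq_zero.1 this).resolve_left h0]

lemma apply_mul_prod_eq_of_walkMatrix_mulVec_eq_neg {v : H → ℝ} (hv : walkMatrix R *ᵥ v = -v) :
    ∀ {L : List H}, (∀ s ∈ L, s ∈ R) → ∀ {g : H}, (∀ h, |v h| ≤ |v g|) →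
      v (g * L.prod) = (-1) ^ L.length * v g
  | [], _, g, _ => by simp
  | s :: L, hL, g, hg => by
    have hs := apply_mul_eq_neg_of_walkMatrix_mulVec_eq_neg R hv hg (hL s List.mem_cons_self)
    have hgs : ∀ h, |v h| ≤ |v (g * s)| := by simpa [hs] using hg
    rw [List.prod_cons, ← mul_assoc, apply_mul_prod_eq_of_walkMatrix_mulVec_eq_neg hv
      (fun t ht => hL t (List.mem_cons_of_mem s ht)) hgs, hs, List.length_cons, pow_succ]
    ring

/-- A closed walk of odd length rules out the eigenvalue `-1`, which would force `v` to
alternate in sign along every walk starting at a maximum of `|v|`. -/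
lemma eq_zero_of_walkMatrix_mulVec_eq_neg {m : ℕ} (hm : Odd m) (hw : (words R m 1).Nonempty)
    {v : H → ℝ} (hv : walkMatrix R *ᵥ v = -v) : v = 0 := by
  obtain ⟨x, hx⟩ := Finite.exists_max fun h => |v h|
  obtain ⟨w, hw⟩ := hw
  simp only [words, mem_filter, mem_univ, true_and] at hw
  have := apply_mul_prod_eq_of_walkMatrix_mulVec_eq_neg R hv (L := List.ofFn w)
    (by simpa [List.mem_ofFn] using hw.1) hx
  rw [hw.2, mul_one, List.length_ofFn, hm.neg_one_pow] at this
  have hx0 : v x = 0 := by linarith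
  funext h
  simpa [hx0] using hx h

lemma inv_card_le_walkMatrix_pow_two_mul_apply (hR : R.Nonempty)
    (hsymm : ∀ s ∈ R, s⁻¹ ∈ R) (d : ℕ) (g : H) :
    (Fintype.card H : ℝ)⁻¹ ≤ (walkMatrix R ^ (2 * d)) g g := by
  have hrow : ∑ h, (walkMatrix R ^ d) g h = 1 := by
    simpa [mulVec, dotProduct] using congrFun (walkMatrix_pow_mulVec_one R hR d) g
  have hsq : (walkMatrix R ^ (2 * d)) g g = ∑ h, (walkMatrix R ^ d) g h ^ 2 := by
    rw [two_mul, pow_add, mul_apply]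
    refine sum_congr rfl fun h _ => ?_
    rw [sq, ← ((walkMatrix_isHermitian R hsymm).pow d).apply g h, star_trivial]
  rw [hsq, inv_le_iff_one_le_mul₀' (by exact_mod_cast Fintype.card_pos)]
  simpa [hrow] using sq_sum_le_card_mul_sum_sq (s := univ) (f := fun h => (walkMatrix R ^ d) g h)

theorem exists_tendsto_card_words_div_pow (hR : R.Nonempty) (hsymm : ∀ s ∈ R, s⁻¹ ∈ R) :
    ∃ L > 0, Tendsto (fun d => (#(words R d 1) : ℝ) / #R ^ d)
      (atTop ⊓ 𝓟 {d | (words R d 1).Nonempty}) (nhds L) := by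
  have hQ := walkMatrix_isHermitian R hsymm
  set b := hQ.eigenvectorBasis
  set μ := hQ.eigenvalues
  have ha : ∀ d, (#(words R d 1) : ℝ) / #R ^ d = ∑ i, b i 1 ^ 2 * μ i ^ d := fun d => by
    rw [← hQ.pow_apply_self_eq_sum, walkMatrix_pow_apply, inv_one, one_mul]
  have hb : ∀ i, ⇑(b i) ≠ 0 := fun i => by simpa using b.orthonormal.ne_zero i
  have hμ : ∀ i, |μ i| ≤ 1 := fun i =>
    abs_le_one_of_walkMatrix_mulVec_eq_smul R hR (hb i) (hQ.mulVec_eigenvectorBasis i)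
  set L := ∑ i with |μ i| = 1, b i 1 ^ 2
  have heven : Tendsto (fun d => (#(words R d 1) : ℝ) / #R ^ d)
      (atTop ⊓ 𝓟 {d | Even d}) (nhds L) := by
    refine ((tendsto_sum_mul_pow (fun i => b i 1 ^ 2) (fun i => |μ i|) (by simpa using hμ)
      fun i => (neg_one_lt_zero.trans_le (abs_nonneg _)).ne').mono_left inf_le_left).congr' ?_
    exact eventually_inf_principal.2 (Eventually.of_forall fun d hd => by simp [ha, hd.pow_abs])
  have hLpos : 0 < L := by
    have h2 := heven.comp (tendsto_inf.2 ⟨tendsto_id.const_mul_atTop' two_pos,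
      tendsto_principal.2 (Eventually.of_forall fun d => even_two_mul d)⟩)
    refine (inv_pos.2 (Nat.cast_pos.2 (Fintype.card_pos (α := H)))).trans_le
      (ge_of_tendsto' h2 fun d => ?_)
    simpa [walkMatrix_pow_apply] using inv_card_le_walkMatrix_pow_two_mul_apply R hR hsymm d 1
  refine ⟨L, hLpos, ?_⟩
  by_cases hodd : ∃ m, Odd m ∧ (words R m 1).Nonempty
  · obtain ⟨m, hm, hw⟩ := hodd
    have hne : ∀ i, μ i ≠ -1 := fun i h => hb i <| eq_zero_of_walkMatrix_mulVec_eq_neg R hm hw <| by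
      rw [hQ.mulVec_eigenvectorBasis, show hQ.eigenvalues i = -1 from h, neg_one_smul]
    have hL : L = ∑ i with μ i = 1, b i 1 ^ 2 :=
      sum_congr (filter_congr fun i _ => by simp [abs_eq zero_le_one, hne i]) fun _ _ => rfl
    simp only [hL, ha]
    exact (tendsto_sum_mul_pow _ _ hμ hne).mono_left inf_le_left
  · refine heven.mono_left (inf_le_inf_left _ (principal_mono.2 fun d hd => ?_))
    exact Nat.not_odd_iff_even.1 fun h => hodd ⟨d, h, hd⟩

end Walk

section RegularMaps

variable (G : Type*) [Fintype G] [DecidableEq G] (k : ℕ)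

def regularMaps : Finset (Fin (k * Fintype.card G) → G) :=
  {f | ∀ v, #{i | f i = v} = k}

variable {G k}

lemma mem_regularMaps {f : Fin (k * Fintype.card G) → G} :
    f ∈ regularMaps G k ↔ ∀ v, #{i | f i = v} = k := by
  simp [regularMaps]

lemma comp_perm_mem_regularMaps {f : Fin (k * Fintype.card G) → G} (hf : f ∈ regularMaps G k)
    (σ : Perm (Fin (k * Fintype.card G))) : f ∘ σ ∈ regularMaps G k :=
  mem_regularMaps.2 fun v => (card_filter_comp_perm σ (f · = v)).trans (mem_regularMaps.1 hf v)

lemma inv_mem_regularMaps [Group G] {f : Fin (k * Fintype.card G) → G}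
    (hf : f ∈ regularMaps G k) : f⁻¹ ∈ regularMaps G k := by
  simpa [mem_regularMaps, inv_eq_iff_eq_inv] using fun v => mem_regularMaps.1 hf v⁻¹

lemma regularMaps_nonempty : (regularMaps G k).Nonempty := by
  let E : Fin k × G ≃ Fin (k * Fintype.card G) := Fintype.equivOfCardEq (by simp)
  refine ⟨fun i => (E.symm i).2, mem_regularMaps.2 fun v => ?_⟩
  rw [card_equiv E.symm (t := {p | p.2 = v}) (by simp), card_filter, Fintype.sum_prod_type]
  simp

/-- Orbit–stabiliser for `Perm (Fin (k * |G|))` acting on maps by precomposition: the regular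
maps form one orbit, and a stabiliser permutes each of the `|G|` fibres of size `k`. -/
theorem card_regularMaps_mul :
    #(regularMaps G k) * k ! ^ Fintype.card G = (k * Fintype.card G)! := by
  obtain ⟨f₀, hf₀⟩ := regularMaps_nonempty (G := G) (k := k)
  have hf₀' := mem_regularMaps.1 hf₀
  have hstab : #{σ : Perm (Fin (k * Fintype.card G)) | f₀ ∘ σ = f₀} = k ! ^ Fintype.card G := by
    rw [← Fintype.card_subtype, DomMulAct.stabilizer_card]
    simp [Fintype.card_subtype, hf₀']
  have hfibre : ∀ f ∈ regularMaps G k,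
      #{σ : Perm (Fin (k * Fintype.card G)) | f₀ ∘ σ = f} =
        #{σ : Perm (Fin (k * Fintype.card G)) | f₀ ∘ σ = f₀} := by
    intro f hf
    obtain ⟨τ, hτ⟩ := exists_perm_comp_eq_of_card_filter_eq (f := f) (g := f₀)
      fun v => by rw [hf₀' v, mem_regularMaps.1 hf v]
    refine card_equiv (Equiv.mulRight τ⁻¹) fun σ => ?_
    simp only [mem_filter, mem_univ, true_and, coe_mulRight, Perm.coe_mul, Perm.inv_def,
      ← Function.comp_assoc, comp_symm_eq, hτ]
  calc #(regularMaps G k) * k ! ^ Fintype.card G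
      = ∑ f ∈ regularMaps G k, #{σ : Perm (Fin (k * Fintype.card G)) | f₀ ∘ σ = f} := by
        rw [sum_congr rfl hfibre, sum_const, smul_eq_mul, hstab]
    _ = #(univ : Finset (Perm (Fin (k * Fintype.card G)))) :=
        (card_eq_sum_card_fiberwise fun σ _ => comp_perm_mem_regularMaps hf₀ σ).symm
    _ = (k * Fintype.card G)! := by simp [Fintype.card_perm]

lemma card_filter_regularMaps_lt [Nontrivial G] (hk : 0 < k) {i j : Fin (k * Fintype.card G)}
    (hij : i ≠ j) : #{f ∈ regularMaps G k | f i = f j} < #(regularMaps G k) := by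
  obtain ⟨f, hf⟩ := regularMaps_nonempty (G := G) (k := k)
  obtain ⟨v, hv⟩ := exists_ne (f i)
  obtain ⟨q, hq⟩ := card_pos.1 ((mem_regularMaps.1 hf v).symm ▸ hk)
  have hfq : f q = v := (mem_filter.1 hq).2
  have hiq : i ≠ q := by rintro rfl; exact hv hfq.symm
  refine card_lt_card (filter_ssubset.2 ⟨f ∘ swap j q, comp_perm_mem_regularMaps hf _, ?_⟩)
  simp [swap_apply_of_ne_of_ne hij hiq, hfq, hv.symm]

end RegularMaps

section Multiplexes

variable {G : Type*} [Fintype G] [DecidableEq G] {d : ℕ} (S : Set (Fin d → G)) (k : ℕ)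

noncomputable def orderedMultiplexes : Finset (Fin (k * Fintype.card G) → Fin d → G) := by
  classical exact {x | IsKMultiplexG S k (univ.val.map x)}

variable {S k}

lemma mem_orderedMultiplexes {x : Fin (k * Fintype.card G) → Fin d → G} :
    x ∈ orderedMultiplexes S k ↔ IsKMultiplexG S k (univ.val.map x) := by
  simp [orderedMultiplexes]

lemma isKMultiplexG_map_univ_iff {x : Fin (k * Fintype.card G) → Fin d → G} :
    IsKMultiplexG S k (univ.val.map x) ↔
      (∀ i, x i ∈ S) ∧ ∀ j, (fun i => x i j) ∈ regularMaps G k := by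
  simp only [IsKMultiplexG, Multiset.card_map, Finset.card_val, card_univ, Fintype.card_fin,
    Multiset.forall_mem_map_iff, mem_univ_val, Multiset.filter_map, ← Finset.filter_val,
    Function.comp_def, true_and, forall_const, mem_regularMaps]

lemma filter_map_univ_eq {x : Fin (k * Fintype.card G) → Fin d → G}
    (hx : x ∈ orderedMultiplexes S k) :
    {y ∈ orderedMultiplexes S k | univ.val.map y = univ.val.map x} =
      univ.image fun σ : Perm (Fin (k * Fintype.card G)) => x ∘ σ := by
  ext y
  simp only [mem_filter, mem_image, mem_univ, true_and]
  constructor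
  · rintro ⟨-, hy⟩
    exact exists_perm_comp_eq_of_map_univ_eq hy
  · rintro ⟨σ, rfl⟩
    exact ⟨mem_orderedMultiplexes.2 (map_univ_comp_perm x σ ▸ mem_orderedMultiplexes.1 hx),
      map_univ_comp_perm x σ⟩

lemma PerkG_eq_card_image :
    PerkG S k = #((orderedMultiplexes S k).image (univ.val.map ·)) := by
  rw [PerkG, ← Set.ncard_coe_finset]
  congr 1
  ext K
  simp only [Set.mem_ofPred_eq, coe_image, Set.mem_image, mem_coe, mem_orderedMultiplexes]
  refine ⟨fun hK => ?_, fun ⟨x, hx, hxK⟩ => hxK ▸ hx⟩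
  obtain ⟨x, rfl⟩ := exists_map_univ_eq (ι := Fin (k * Fintype.card G)) (by simpa using hK.1)
  exact ⟨x, hK, rfl⟩

lemma perkG_eq_card_filter_nodup :
    perkG S k = #{K ∈ (orderedMultiplexes S k).image (univ.val.map ·) | K.Nodup} := by
  rw [perkG, ← Set.ncard_coe_finset]
  congr 1
  ext K
  simp only [Set.mem_ofPred_eq, coe_filter, mem_image, mem_orderedMultiplexes]
  refine ⟨fun hK => ?_, fun ⟨⟨x, hx, hxK⟩, hK⟩ => ⟨hK, hxK ▸ hx⟩⟩
  obtain ⟨x, rfl⟩ := exists_map_univ_eq (ι := Fin (k * Fintype.card G)) (by simpa using hK.2.1)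
  exact ⟨⟨x, hK.2, rfl⟩, hK.1⟩

lemma card_orderedMultiplexes_le :
    #(orderedMultiplexes S k) ≤ (k * Fintype.card G)! * PerkG S k := by
  rw [PerkG_eq_card_image]
  refine card_le_mul_card_image _ _ fun K hK => ?_
  obtain ⟨x, hx, rfl⟩ := mem_image.1 hK
  rw [filter_map_univ_eq hx]
  exact card_image_le.trans (by simp [Fintype.card_perm])

lemma mul_perkG_le_card_orderedMultiplexes :
    (k * Fintype.card G)! * perkG S k ≤ #(orderedMultiplexes S k) := by
  have hfibre : ∀ K ∈ {K ∈ (orderedMultiplexes S k).image (univ.val.map ·) | K.Nodup},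
      (k * Fintype.card G)! ≤ #{y ∈ orderedMultiplexes S k | univ.val.map y = K} := by
    intro K hK
    obtain ⟨hK, hnodup⟩ := mem_filter.1 hK
    obtain ⟨x, hx, rfl⟩ := mem_image.1 hK
    have hinj : Function.Injective x := fun a b hab =>
      (Multiset.nodup_map_iff_inj_on univ.nodup).1 hnodup a (mem_univ_val a) b (mem_univ_val b) hab
    have hσ : Function.Injective fun σ : Perm (Fin (k * Fintype.card G)) => x ∘ σ :=
      fun σ τ h => Equiv.ext fun a => hinj (congrFun h a)
    rw [filter_map_univ_eq hx, card_image_of_injective _ hσ]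
    simp [Fintype.card_perm]
  rw [perkG_eq_card_filter_nodup, mul_comm, ← smul_eq_mul, ← sum_const]
  calc _ ≤ _ := sum_le_sum hfibre
    _ ≤ _ := sum_le_sum_of_subset (filter_subset _ _)
    _ = _ := (card_eq_sum_card_image _ _).symm

lemma PerkG_le_perkG_add {i j : Fin (k * Fintype.card G)} (hij : i ≠ j) :
    PerkG S k ≤ perkG S k + #{f ∈ regularMaps G k | f i = f j} ^ d := by
  rw [PerkG_eq_card_image, perkG_eq_card_filter_nodup,
    ← card_filter_add_card_filter_not Multiset.Nodup, add_le_add_iff_left]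
  calc _ ≤ #(Fintype.piFinset fun _ : Fin d => {f ∈ regularMaps G k | f i = f j}) :=
        card_le_card_of_surjOn (fun c => univ.val.map (Function.swap c)) ?_
    _ = _ := by simp
  intro K hK
  obtain ⟨hK, hnodup⟩ := mem_filter.1 hK
  obtain ⟨x, hx, rfl⟩ := mem_image.1 hK
  obtain ⟨p, q, hpq, hne⟩ : ∃ p q, x p = x q ∧ p ≠ q := by
    by_contra! h
    exact hnodup ((Multiset.nodup_map_iff_inj_on univ.nodup).2 fun a _ b _ hab => h a b hab)
  obtain ⟨σ, hσi, hσj⟩ := Perm.exists_apply_eq_and_apply_eq hij hne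
  have hcol := (isKMultiplexG_map_univ_iff.1 (mem_orderedMultiplexes.1 hx)).2
  refine ⟨Function.swap (x ∘ σ), Fintype.mem_piFinset.2 fun c => mem_filter.2
    ⟨comp_perm_mem_regularMaps (hcol c) σ, by simp [Function.swap, hσi, hσj, hpq]⟩,
    map_univ_comp_perm x σ⟩

lemma perkG_le_PerkG : perkG S k ≤ PerkG S k := by
  rw [perkG_eq_card_filter_nodup, PerkG_eq_card_image]
  exact card_filter_le _ _

lemma PerkG_le_card_orderedMultiplexes : PerkG S k ≤ #(orderedMultiplexes S k) :=
  PerkG_eq_card_image (S := S) ▸ card_image_le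

lemma abs_sub_card_orderedMultiplexes_div_le {F : ℕ} (h₁ : perkG S k ≤ F) (h₂ : F ≤ PerkG S k)
    {i j : Fin (k * Fintype.card G)} (hij : i ≠ j) :
    |(F : ℝ) - #(orderedMultiplexes S k) / (k * Fintype.card G)!| ≤
      (#{f ∈ regularMaps G k | f i = f j} : ℝ) ^ d := by
  have hN : (0 : ℝ) < (k * Fintype.card G)! := by positivity
  have hlo : (perkG S k : ℝ) ≤ #(orderedMultiplexes S k) / (k * Fintype.card G)! := by
    rw [le_div_iff₀' hN]
    exact_mod_cast mul_perkG_le_card_orderedMultiplexes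
  have hhi : (#(orderedMultiplexes S k) : ℝ) / (k * Fintype.card G)! ≤ PerkG S k := by
    rw [div_le_iff₀' hN]
    exact_mod_cast card_orderedMultiplexes_le
  have hgap : (PerkG S k : ℝ) ≤ perkG S k + (#{f ∈ regularMaps G k | f i = f j} : ℝ) ^ d := by
    exact_mod_cast PerkG_le_perkG_add hij
  have h₁' : (perkG S k : ℝ) ≤ F := by exact_mod_cast h₁
  have h₂' : (F : ℝ) ≤ PerkG S k := by exact_mod_cast h₂
  rw [abs_le]
  constructor <;> linarith

lemma PerkG_le_one [Subsingleton G] : PerkG S k ≤ 1 := by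
  have h : {K | IsKMultiplexG S k K}.Subsingleton := fun K hK K' hK' =>
    Multiset.ext.2 fun a => by
      rw [Multiset.count_eq_card.2 fun _ _ => Subsingleton.elim _ _,
        Multiset.count_eq_card.2 fun _ _ => Subsingleton.elim _ _, hK.1, hK'.1]
  exact (Set.ncard_le_one h.finite).2 h

lemma card_orderedMultiplexes_SdG [Group G] :
    #(orderedMultiplexes (SdG G d) k) = #(words (regularMaps G k) d 1) := by
  refine card_equiv (Equiv.piComm _) fun x => ?_
  rw [mem_orderedMultiplexes, isKMultiplexG_map_univ_iff]
  simp only [words, SdG, mem_filter, mem_univ, true_and, Set.mem_ofPred_eq, funext_iff,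
    Pi.list_prod_apply, List.map_ofFn, Pi.one_apply, and_comm]
  rfl

end Multiplexes

theorem exists_tendsto_div_card_regularMaps_pow {G : Type*} [Group G] [Fintype G] [DecidableEq G]
    [Nontrivial G] {k : ℕ} (hk : 0 < k) :
    ∃ c > 0, ∀ F : ℕ → ℕ, (∀ d, perkG (SdG G d) k ≤ F d) → (∀ d, F d ≤ PerkG (SdG G d) k) →
      Tendsto (fun d => (F d : ℝ) / (#(regularMaps G k) : ℝ) ^ (d - 2))
        (atTop ⊓ 𝓟 {d | F d ≠ 0}) (nhds c) := by
  obtain ⟨i, j, hij⟩ := Fintype.exists_pair_of_one_lt_card (α := Fin (k * Fintype.card G))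
    (by simpa using one_lt_mul_of_le_of_lt hk Fintype.one_lt_card)
  obtain ⟨L, hL, hT⟩ := exists_tendsto_card_words_div_pow (regularMaps G k) regularMaps_nonempty
    fun _ => inv_mem_regularMaps
  have hR : (0 : ℝ) < #(regularMaps G k) := by simpa using regularMaps_nonempty
  refine ⟨#(regularMaps G k) ^ 2 * (L / (k * Fintype.card G)!), by positivity,
    fun F h₁ h₂ => tendsto_div_pow_sub_two_of_abs_sub_le inf_le_left (hT.mono_left ?_)
      (Nat.cast_nonneg _) (by exact_mod_cast card_filter_regularMaps_lt hk hij) fun d => ?_⟩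
  · refine inf_le_inf_left _ (principal_mono.2 fun d hd => ?_)
    rw [Set.mem_ofPred_eq, ← card_pos, ← card_orderedMultiplexes_SdG]
    exact (Nat.pos_of_ne_zero hd).trans_le ((h₂ d).trans PerkG_le_card_orderedMultiplexes)
  · rw [← card_orderedMultiplexes_SdG]
    exact abs_sub_card_orderedMultiplexes_div_le (h₁ d) (h₂ d) hij

open Filter in
theorem iterated_group_odd_plex_asymptotics_general (G : Type*) [Group G] [Fintype G]
    [DecidableEq G] (k : ℕ) (hk : 0 < k) :
    ∃ c : ℝ, 0 < c ∧
      Tendsto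
        (fun d : ℕ => (PerkG (SdG G d) k : ℝ) /
          (((k * Fintype.card G).factorial : ℝ) /
            (k.factorial : ℝ) ^ (Fintype.card G)) ^ (d - 2))
        (atTop ⊓ 𝓟 {d : ℕ | PerkG (SdG G d) k ≠ 0}) (nhds c) ∧
      Tendsto
        (fun d : ℕ => (perkG (SdG G d) k : ℝ) /
          (((k * Fintype.card G).factorial : ℝ) /
            (k.factorial : ℝ) ^ (Fintype.card G)) ^ (d - 2))
        (atTop ⊓ 𝓟 {d : ℕ | perkG (SdG G d) k ≠ 0}) (nhds c) := by
  rcases subsingleton_or_nontrivial G with hG | hG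
  · have hcard : Fintype.card G = 1 :=
      (Fintype.card_le_one_iff_subsingleton.2 hG).antisymm Fintype.card_pos
    have key : ∀ F : ℕ → ℕ, (∀ d, F d ≤ 1) →
        Tendsto (fun d => (F d : ℝ) / (((k * 1)! : ℝ) / (k ! : ℝ) ^ 1) ^ (d - 2))
          (atTop ⊓ 𝓟 {d | F d ≠ 0}) (nhds 1) := fun F hF =>
      tendsto_const_nhds.congr' <| eventually_inf_principal.2 <| .of_forall fun d hd => by
        have hFd : F d = 1 := (hF d).antisymm (Nat.one_le_iff_ne_zero.2 hd)
        simp [hFd, Nat.factorial_ne_zero]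
    simp only [hcard]
    exact ⟨1, one_pos, key _ fun _ => PerkG_le_one,
      key _ fun _ => perkG_le_PerkG.trans PerkG_le_one⟩
  · obtain ⟨c, hc, key⟩ := exists_tendsto_div_card_regularMaps_pow (G := G) hk
    have hr : ((k * Fintype.card G)! : ℝ) / (k ! : ℝ) ^ Fintype.card G = #(regularMaps G k) := by
      rw [div_eq_iff (by positivity)]
      exact_mod_cast card_regularMaps_mul.symm
    rw [hr]
    exact ⟨c, hc, key _ (fun _ => perkG_le_PerkG) fun _ => le_rfl,
      key _ (fun _ => le_rfl) fun _ => perkG_le_PerkG⟩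

open Filter in
/-- For a finite group `G` of order `n` and an odd positive `k`, there
is a constant `c = c(G,k) > 0` such that `Per_k(S_d(G)) / ((kn)!/(k!)^n)^(d-2) → c`
along the set of `d` with `Per_k(S_d(G)) ≠ 0`, and
`per_k(S_d(G)) / ((kn)!/(k!)^n)^(d-2) → c` along the set of `d` with
`per_k(S_d(G)) ≠ 0`. -/
theorem iterated_group_odd_plex_asymptotics (G : Type*) [Group G] [Fintype G]
    [DecidableEq G] (k : ℕ) (hk : 0 < k) (hko : Odd k) :
    ∃ c : ℝ, 0 < c ∧
      Tendsto
        (fun d : ℕ => (PerkG (SdG G d) k : ℝ) /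
          (((k * Fintype.card G).factorial : ℝ) /
            (k.factorial : ℝ) ^ (Fintype.card G)) ^ (d - 2))
        (atTop ⊓ 𝓟 {d : ℕ | PerkG (SdG G d) k ≠ 0}) (nhds c) ∧
      Tendsto
        (fun d : ℕ => (perkG (SdG G d) k : ℝ) /
          (((k * Fintype.card G).factorial : ℝ) /
            (k.factorial : ℝ) ^ (Fintype.card G)) ^ (d - 2))
        (atTop ⊓ 𝓟 {d : ℕ | perkG (SdG G d) k ≠ 0}) (nhds c) :=
  iterated_group_odd_plex_asymptotics_general G k hk
end
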